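/- arXiv:1603.04868 — 3 statements merged into one kernel-verified Lean document; each statement's English description precedes it below -/
import Mathlib

section
/- The function g(z) = (e^{√z} − e^{−√z})/√z, defined for z > 0 (extended by g(0) = 2), is convex on [0, ∞). -/
noncomputable def g : ℝ → ℝ := fun z =>
  if z = 0 then 2 else (Real.exp (Real.sqrt z) - Real.exp (-Real.sqrt z)) / Real.sqrt z

/-!
For `z ≥ 0` the sinh series gives `g z = ∑ₙ 2 zⁿ / (2n + 1)!`, a series of monomials with
nonnegative coefficients, each convex on `[0, ∞)`, and a convergent sum of convex functions
is convex.
-/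

open Nat

theorem ConvexOn.of_hasSum {𝕜 E β ι : Type*} [Semiring 𝕜] [PartialOrder 𝕜]
    [AddCommMonoid E] [Module 𝕜 E] [AddCommMonoid β] [PartialOrder β] [IsOrderedAddMonoid β]
    [TopologicalSpace β] [ContinuousAdd β] [OrderClosedTopology β] [Module 𝕜 β]
    [ContinuousConstSMul 𝕜 β]
    {s : Set E} {f : ι → E → β} {F : E → β} (hs : Convex 𝕜 s)
    (hf : ∀ i, ConvexOn 𝕜 s (f i)) (hF : ∀ x ∈ s, HasSum (fun i ↦ f i x) (F x)) :
    ConvexOn 𝕜 s F :=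
  ⟨hs, fun x hx y hy a b ha hb hab ↦
    hasSum_le (fun i ↦ (hf i).2 hx hy ha hb hab) (hF _ (hs hx hy ha hb hab))
      (((hF x hx).const_smul a).add ((hF y hy).const_smul b))⟩

theorem g_eq_two_mul_sinh_sqrt_div {z : ℝ} (hz : z ≠ 0) :
    g z = 2 * Real.sinh (√z) / √z := by
  simp only [g, if_neg hz, Real.sinh_eq]
  ring

theorem hasSum_g {z : ℝ} (hz : 0 ≤ z) :
    HasSum (fun n : ℕ ↦ 2 * z ^ n / (2 * n + 1)!) (g z) := by
  rcases hz.eq_or_lt with rfl | hz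
  · convert hasSum_ite_eq 0 (2 : ℝ) using 2 with n
    · rcases n.eq_zero_or_pos with rfl | hn
      · simp
      · simp [hn.ne', zero_pow hn.ne']
    · simp [g]
  · rw [g_eq_two_mul_sinh_sqrt_div hz.ne']
    refine (((Real.hasSum_sinh √z).mul_left 2).div_const √z).congr_fun fun n ↦ ?_
    have hsqrt : √z ≠ 0 := (Real.sqrt_pos.mpr hz).ne'
    rw [pow_succ, pow_mul, Real.sq_sqrt hz.le]
    field_simp

theorem convexOn_two_mul_pow_div_factorial (n : ℕ) :
    ConvexOn ℝ (Set.Ici 0) (fun z : ℝ ↦ 2 * z ^ n / (2 * n + 1)!) :=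
  ((convexOn_pow n).smul (by positivity : (0 : ℝ) ≤ 2 / (2 * n + 1)!)).congr fun z _ ↦ by
    simp only [smul_eq_mul]
    ring

theorem g_convex : ConvexOn ℝ (Set.Ici (0 : ℝ)) g :=
  .of_hasSum (convex_Ici 0) convexOn_two_mul_pow_div_factorial fun _ hz ↦ hasSum_g hz
end

section
/- Let q_i, q_j, q_k be unit vectors with pairwise inner products at least γ ∈ (−1, 1]. Define q_{ij} = (q_i + q_j)/‖q_i + q_j‖ and q_{ik} = (q_i + q_k)/‖q_i + q_k‖. Then ⟨q_{ij}, q_{ik}⟩ = (1 + ⟨q_i,q_k⟩ + ⟨q_i,q_j⟩ + ⟨q_j,q_k⟩)/(2√(1 + ⟨q_i,q_j⟩)·√(1 + ⟨q_i,q_k⟩)) ≥ (1 + 3γ)/(2(1 + γ)). -/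
open scoped RealInnerProductSpace

section UnitVectors

variable {E : Type*} [NormedAddCommGroup E] [InnerProductSpace ℝ E] {x y z : E}

theorem norm_add_of_norm_eq_one (hx : ‖x‖ = 1) (hy : ‖y‖ = 1) :
    ‖x + y‖ = √2 * √(1 + ⟪x, y⟫) := by
  have hsq : ‖x + y‖ ^ 2 = 2 * (1 + ⟪x, y⟫) := by
    rw [norm_add_sq_real, hx, hy]
    ring
  rw [← Real.sqrt_mul zero_le_two, ← hsq, Real.sqrt_sq (norm_nonneg _)]

theorem inner_add_add_of_norm_eq_one (hx : ‖x‖ = 1) :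
    ⟪x + y, x + z⟫ = 1 + ⟪x, z⟫ + ⟪x, y⟫ + ⟪y, z⟫ := by
  rw [inner_add_left, inner_add_right, inner_add_right, real_inner_self_eq_norm_sq, hx,
    real_inner_comm y x]
  ring

theorem inner_normalized_add_of_norm_eq_one (hx : ‖x‖ = 1) (hy : ‖y‖ = 1) (hz : ‖z‖ = 1) :
    ⟪‖x + y‖⁻¹ • (x + y), ‖x + z‖⁻¹ • (x + z)⟫ =
      (1 + ⟪x, z⟫ + ⟪x, y⟫ + ⟪y, z⟫) / (2 * √(1 + ⟪x, y⟫) * √(1 + ⟪x, z⟫)) := by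
  rw [real_inner_smul_left, real_inner_smul_right, inner_add_add_of_norm_eq_one hx,
    norm_add_of_norm_eq_one hx hy, norm_add_of_norm_eq_one hx hz]
  conv_rhs => rw [← Real.mul_self_sqrt zero_le_two]
  ring

end UnitVectors

theorem div_le_div_two_mul_sqrt_mul_sqrt {γ a b c : ℝ} (hγ : -1 < γ) (hγ1 : γ ≤ 1)
    (ha : γ ≤ a) (hb : γ ≤ b) (hc : γ ≤ c) :
    (1 + 3 * γ) / (2 * (1 + γ)) ≤ (1 + b + a + c) / (2 * √(1 + a) * √(1 + b)) := by
  have hs : 0 < 1 + γ := by linarith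
  have hu2 : √(1 + a) ^ 2 = 1 + a := Real.sq_sqrt (by linarith)
  have hv2 : √(1 + b) ^ 2 = 1 + b := Real.sq_sqrt (by linarith)
  have hu : 0 < √(1 + a) := Real.sqrt_pos.2 (by linarith)
  have hv : 0 < √(1 + b) := Real.sqrt_pos.2 (by linarith)
  have huv : 1 + γ ≤ √(1 + a) * √(1 + b) := by
    rw [← Real.sqrt_mul (by linarith), Real.le_sqrt' hs, sq]
    exact mul_le_mul (by linarith) (by linarith) hs.le (by linarith)
  rw [div_le_div_iff₀ (by positivity) (by positivity)]
  -- With u = √(1 + a), v = √(1 + b), s = 1 + γ and c ≥ γ, the cross-multiplied claim follows from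
  -- s (u² + v² + s - 2) - (3s - 2) u v = s (u - v)² + (2 - s) (u v - s).
  nlinarith [mul_nonneg hs.le (sq_nonneg (√(1 + a) - √(1 + b))),
    mul_nonneg (sub_nonneg.2 hγ1) (sub_nonneg.2 huv)]

theorem tie_edge_bound_general {E : Type*} [NormedAddCommGroup E] [InnerProductSpace ℝ E]
    (qi qj qk : E) (hqi : ‖qi‖ = 1) (hqj : ‖qj‖ = 1) (hqk : ‖qk‖ = 1)
    (γ Γ : ℝ) (hγ : -1 < γ) (hγ1 : γ ≤ 1)
    (hij : ⟪qi, qj⟫ ∈ Set.Icc γ Γ) (hik : ⟪qi, qk⟫ ∈ Set.Icc γ Γ)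
    (hjk : ⟪qj, qk⟫ ∈ Set.Icc γ Γ) :
    ⟪(‖qi + qj‖)⁻¹ • (qi + qj), (‖qi + qk‖)⁻¹ • (qi + qk)⟫ =
      (1 + ⟪qi, qk⟫ + ⟪qi, qj⟫ + ⟪qj, qk⟫) /
        (2 * Real.sqrt (1 + ⟪qi, qj⟫) * Real.sqrt (1 + ⟪qi, qk⟫)) ∧
      (1 + 3 * γ) / (2 * (1 + γ)) ≤
        ⟪(‖qi + qj‖)⁻¹ • (qi + qj), (‖qi + qk‖)⁻¹ • (qi + qk)⟫ := by
  have hformula := inner_normalized_add_of_norm_eq_one hqi hqj hqk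
  refine ⟨hformula, ?_⟩
  rw [hformula]
  exact div_le_div_two_mul_sqrt_mul_sqrt hγ hγ1 hij.1 hik.1 hjk.1

theorem tie_edge_bound {E : Type*} [NormedAddCommGroup E] [InnerProductSpace ℝ E]
    (qi qj qk : E) (hqi : ‖qi‖ = 1) (hqj : ‖qj‖ = 1) (hqk : ‖qk‖ = 1)
    (γ Γ : ℝ) (hγ : -1 < γ) (hγ1 : γ ≤ 1) (hΓ : Γ ≤ 1)
    (hij : ⟪qi, qj⟫ ∈ Set.Icc γ Γ) (hik : ⟪qi, qk⟫ ∈ Set.Icc γ Γ)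
    (hjk : ⟪qj, qk⟫ ∈ Set.Icc γ Γ) (hsum : γ + Γ < 1 + γ) :
    ⟪(‖qi + qj‖)⁻¹ • (qi + qj), (‖qi + qk‖)⁻¹ • (qi + qk)⟫ =
      (1 + ⟪qi, qk⟫ + ⟪qi, qj⟫ + ⟪qj, qk⟫) /
        (2 * Real.sqrt (1 + ⟪qi, qj⟫) * Real.sqrt (1 + ⟪qi, qk⟫)) ∧
      (1 + 3 * γ) / (2 * (1 + γ)) ≤
        ⟪(‖qi + qj‖)⁻¹ • (qi + qj), (‖qi + qk‖)⁻¹ • (qi + qk)⟫ :=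
  tie_edge_bound_general qi qj qk hqi hqj hqk γ Γ hγ hγ1 hij hik hjk
end

section
/- Let u, v ∈ ℝ³ and let R(q) be the rotation matrix associated to a unit quaternion q = (q_i, q_j, q_k, q_r). Then uᵀR(q)v = qᵀ·Ξ(u,v)·q, where Ξ(u,v) is the symmetric 4×4 matrix with diagonal entries (u_iv_i − u_jv_j − u_kv_k, u_jv_j − u_iv_i − u_kv_k, u_kv_k − u_iv_i − u_jv_j, uᵀv) and off-diagonal entries Ξ₁₂ = u_jv_i + u_iv_j, Ξ₁₃ = u_iv_k + u_kv_i, Ξ₁₄ = u_kv_j − u_jv_k, Ξ₂₃ = u_jv_k + u_kv_j, Ξ₂₄ = u_iv_k − u_kv_i, Ξ₃₄ = u_jv_i − u_iv_j. -/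
open scoped Matrix

theorem xi_matrix (u v : Fin 3 → ℝ) (q : Fin 4 → ℝ)
    (hq : q 0 ^ 2 + q 1 ^ 2 + q 2 ^ 2 + q 3 ^ 2 = 1) :
    u ⬝ᵥ (Matrix.mulVec
      !![1 - 2 * q 1 ^ 2 - 2 * q 2 ^ 2, 2 * (q 0 * q 1 - q 2 * q 3), 2 * (q 0 * q 2 + q 1 * q 3);
         2 * (q 0 * q 1 + q 2 * q 3), 1 - 2 * q 0 ^ 2 - 2 * q 2 ^ 2, 2 * (q 1 * q 2 - q 0 * q 3);
         2 * (q 0 * q 2 - q 1 * q 3), 2 * (q 1 * q 2 + q 0 * q 3), 1 - 2 * q 0 ^ 2 - 2 * q 1 ^ 2] v)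
    = q ⬝ᵥ (Matrix.mulVec
      !![u 0 * v 0 - u 1 * v 1 - u 2 * v 2, u 1 * v 0 + u 0 * v 1, u 0 * v 2 + u 2 * v 0, u 2 * v 1 - u 1 * v 2;
         u 1 * v 0 + u 0 * v 1, u 1 * v 1 - u 0 * v 0 - u 2 * v 2, u 1 * v 2 + u 2 * v 1, u 0 * v 2 - u 2 * v 0;
         u 0 * v 2 + u 2 * v 0, u 1 * v 2 + u 2 * v 1, u 2 * v 2 - u 0 * v 0 - u 1 * v 1, u 1 * v 0 - u 0 * v 1;
         u 2 * v 1 - u 1 * v 2, u 0 * v 2 - u 2 * v 0, u 1 * v 0 - u 0 * v 1, u 0 * v 0 + u 1 * v 1 + u 2 * v 2] q) := by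
  simp only [dotProduct, Matrix.mulVec, Fin.sum_univ_three, Fin.sum_univ_four, Matrix.of_apply,
    Matrix.cons_val]
  -- The right side is a quadratic form in q, while the diagonal of R(q) carries a constant 1;
  -- writing 1 = ‖q‖² there, the two sides differ by (uᵀv)(‖q‖² - 1).
  linear_combination -(u 0 * v 0 + u 1 * v 1 + u 2 * v 2) * hq
end
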